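/- Let V be the collector matrix of a surjection K : Fin n → Fin l, let Q, R be n×n real matrices and Q̂, R̂ be l×l real matrices with Q·V = V·Q̂ and R·V = V·R̂. If F : ℝ → ℝⁿ (viewed as a row vector of functions) has components differentiable on (0,∞) and satisfies F′(x)·R = F(x)·Q for all x > 0, then G(x) = F(x)·V satisfies G′(x)·R̂ = G(x)·Q̂ for all x > 0; that is, the aggregated fluid distribution vector is a solution of the quotient system of ordinary differential equations. -/
import Mathlib


/-- The collector matrix of a partition map `K : Fin n → Fin l`:
`V_{ir} = 1` if `K i = r` and `0` otherwise. -/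
def collector {n l : ℕ} (K : Fin n → Fin l) : Matrix (Fin n) (Fin l) ℝ :=
  Matrix.of fun i r => if K i = r then 1 else 0

/-- The distributor matrix of a partition map `K : Fin n → Fin l`:
`W_{ri} = 1/|K⁻¹(r)|` if `K i = r` and `0` otherwise. -/
noncomputable def distributor {n l : ℕ} (K : Fin n → Fin l) : Matrix (Fin l) (Fin n) ℝ :=
  Matrix.of fun r i =>
    if K i = r then (1 : ℝ) / (Finset.univ.filter fun j => K j = r).card else 0

/-- If `Q·V = V·Q̂` and `R·V = V·R̂` for the collector matrix `V` of a surjection `K`, and the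
row vector of functions `F` has components differentiable on `(0,∞)` and satisfies
`F′(x)·R = F(x)·Q` for all `x > 0`, then `G(x) = F(x)·V` satisfies `G′(x)·R̂ = G(x)·Q̂`
for all `x > 0`. -/
theorem aggregated_fluid_distribution_solves_quotient {n l : ℕ}
    (K : Fin n → Fin l) (hK : Function.Surjective K)
    (Q R : Matrix (Fin n) (Fin n) ℝ) (Qh Rh : Matrix (Fin l) (Fin l) ℝ)
    (hQV : Q * collector K = collector K * Qh)
    (hRV : R * collector K = collector K * Rh)
    (F : ℝ → Fin n → ℝ)
    (hdiff : ∀ i : Fin n, ∀ x ∈ Set.Ioi (0 : ℝ), DifferentiableAt ℝ (fun y => F y i) x)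
    (hODE : ∀ x ∈ Set.Ioi (0 : ℝ),
      Matrix.vecMul (fun i => deriv (fun y => F y i) x) R = Matrix.vecMul (F x) Q)
    (x : ℝ) (hx : x ∈ Set.Ioi (0 : ℝ)) :
    Matrix.vecMul (fun r => deriv (fun y => Matrix.vecMul (F y) (collector K) r) x) Rh =
      Matrix.vecMul (Matrix.vecMul (F x) (collector K)) Qh := by
  have hG : (fun r => deriv (fun y => Matrix.vecMul (F y) (collector K) r) x) =
      Matrix.vecMul (fun i => deriv (fun y => F y i) x) (collector K) := by
    funext r
    have : (fun y => Matrix.vecMul (F y) (collector K) r) =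
        fun y => ∑ i, F y i * collector K i r := by
      funext y; simp [Matrix.vecMul, dotProduct]
    rw [this]
    rw [deriv_fun_sum (fun i _ => ((hdiff i x hx).mul_const _))]
    simp only [Matrix.vecMul, dotProduct]
    congr 1; funext i
    rw [deriv_mul_const (hdiff i x hx)]
  rw [hG, Matrix.vecMul_vecMul, ← hRV, ← Matrix.vecMul_vecMul, hODE x hx,
    Matrix.vecMul_vecMul, hQV, ← Matrix.vecMul_vecMul]
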